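/- Define S_H = { A ∈ S^n : diag(A) = 0 } and S_C = { B ∈ S^n : Be = 0 }, and the linear maps K(B) = diag(B)e^T + e diag(B)^T - 2B and T(D) = -½ J D J with J = I - ee^T/n. Then K(S_C) = S_H, T(S_H) = S_C, and the restrictions K|_{S_C} and T|_{S_H} are mutually inverse linear isomorphisms. -/
import Mathlib

open Matrix BigOperators

/-- The map `K(B) = diag(B)eᵀ + e diag(B)ᵀ - 2B`, entrywise
`K(B) i j = B i i + B j j - 2 B i j`. -/
def Kmap {n : ℕ} (B : Matrix (Fin n) (Fin n) ℝ) : Matrix (Fin n) (Fin n) ℝ :=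
  Matrix.of fun i j => B i i + B j j - 2 * B i j

/-- The map `T(D) = -½ J D J` with `J = I - eeᵀ/n`. -/
noncomputable def Tmap {n : ℕ} (D : Matrix (Fin n) (Fin n) ℝ) : Matrix (Fin n) (Fin n) ℝ :=
  (-(1/2) : ℝ) • ((1 - (n : ℝ)⁻¹ • Matrix.of (fun _ _ => (1 : ℝ))) * D *
    (1 - (n : ℝ)⁻¹ • Matrix.of (fun _ _ => (1 : ℝ)))) 

lemma Tmap_apply {n : ℕ} (D : Matrix (Fin n) (Fin n) ℝ) (i j : Fin n) :
    Tmap D i j = -(1/2) * (D i j - (n:ℝ)⁻¹ * ∑ k, D i k - (n:ℝ)⁻¹ * ∑ k, D k j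
      + (n:ℝ)⁻¹ * (n:ℝ)⁻¹ * ∑ k, ∑ l, D k l) := by
  have h1 : ((Matrix.of (fun _ _ => (1 : ℝ)) : Matrix (Fin n) (Fin n) ℝ) * D) i j
      = ∑ k, D k j := by simp [Matrix.mul_apply]
  have h2 : (D * (Matrix.of (fun _ _ => (1 : ℝ)) : Matrix (Fin n) (Fin n) ℝ)) i j
      = ∑ k, D i k := by simp [Matrix.mul_apply]
  have h3 : ((Matrix.of (fun _ _ => (1 : ℝ)) : Matrix (Fin n) (Fin n) ℝ) * D *
      (Matrix.of (fun _ _ => (1 : ℝ)) : Matrix (Fin n) (Fin n) ℝ)) i j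
      = ∑ k, ∑ l, D k l := by
    simp [Matrix.mul_apply]
    rw [Finset.sum_comm]
  have h : ((1 : Matrix (Fin n) (Fin n) ℝ) - (n : ℝ)⁻¹ • Matrix.of (fun _ _ => (1 : ℝ))) * D *
      (1 - (n : ℝ)⁻¹ • Matrix.of (fun _ _ => (1 : ℝ)))
      = D - (n:ℝ)⁻¹ • ((Matrix.of (fun _ _ => (1 : ℝ)) : Matrix (Fin n) (Fin n) ℝ) * D)
        - (n:ℝ)⁻¹ • (D * (Matrix.of (fun _ _ => (1 : ℝ)) : Matrix (Fin n) (Fin n) ℝ))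
        + ((n:ℝ)⁻¹ * (n:ℝ)⁻¹) • ((Matrix.of (fun _ _ => (1 : ℝ)) : Matrix (Fin n) (Fin n) ℝ) * D *
            (Matrix.of (fun _ _ => (1 : ℝ)) : Matrix (Fin n) (Fin n) ℝ)) := by
    simp only [sub_mul, mul_sub, one_mul, mul_one, smul_mul_assoc, mul_smul_comm, smul_smul]
    module
  simp only [Tmap, h, Matrix.smul_apply, Matrix.add_apply, Matrix.sub_apply, h1, h2, h3,
    smul_eq_mul]
  ring

/-- `K(S_C) = S_H`, `T(S_H) = S_C`, and the restrictions of `K` to `S_C` and of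
`T` to `S_H` are mutually inverse. -/
theorem stmt3 (n : ℕ) (hn : 0 < n)
    (SH SC : Set (Matrix (Fin n) (Fin n) ℝ))
    (hSH : SH = {A | A.IsSymm ∧ ∀ i, A i i = 0})
    (hSC : SC = {B | B.IsSymm ∧ B *ᵥ (fun _ => (1 : ℝ)) = 0}) :
    Kmap '' SC = SH ∧ Tmap '' SH = SC ∧
    (∀ B ∈ SC, Tmap (Kmap B) = B) ∧ (∀ D ∈ SH, Kmap (Tmap D) = D) := by
  have hnR : (n : ℝ) ≠ 0 := Nat.cast_ne_zero.mpr hn.ne'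
  subst hSH hSC
  have rowsum : ∀ (B : Matrix (Fin n) (Fin n) ℝ), B *ᵥ (fun _ => (1:ℝ)) = 0 ↔
      ∀ i, ∑ k, B i k = 0 := by
    intro B
    constructor
    · intro h i; have := congrFun h i; simpa [Matrix.mulVec, dotProduct] using this
    · intro h; funext i; simpa [Matrix.mulVec, dotProduct] using h i
  -- K maps symmetric matrices into SH
  have hK : ∀ B : Matrix (Fin n) (Fin n) ℝ, B.IsSymm →
      (Kmap B).IsSymm ∧ ∀ i, Kmap B i i = 0 := by
    intro B hB
    refine ⟨?_, fun i => by simp [Kmap]; ring⟩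
    ext i j
    simp only [Matrix.transpose_apply, Kmap, Matrix.of_apply]
    rw [hB.apply i j]
    ring
  -- T maps symmetric matrices into SC
  have hT : ∀ D : Matrix (Fin n) (Fin n) ℝ, D.IsSymm →
      (Tmap D).IsSymm ∧ (Tmap D) *ᵥ (fun _ => (1:ℝ)) = 0 := by
    intro D hD
    have hsym : ∀ i j, D j i = D i j := fun i j => (hD.apply j i).symm
    constructor
    · ext i j
      simp only [Matrix.transpose_apply, Tmap_apply]
      rw [hsym i j,
        show (∑ k, D j k) = ∑ k, D k j from Finset.sum_congr rfl (fun k _ => hsym k j),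
        show (∑ k, D k i) = ∑ k, D i k from Finset.sum_congr rfl (fun k _ => (hsym k i).symm)]
      ring
    · rw [rowsum]
      intro i
      have hs : ∑ j, ∑ k, D k j = ∑ k, ∑ l, D k l := Finset.sum_comm
      calc ∑ j, Tmap D i j
          = ∑ j, (-(1/2)) * (D i j - (n:ℝ)⁻¹ * (∑ k, D i k) - (n:ℝ)⁻¹ * (∑ k, D k j)
              + (n:ℝ)⁻¹ * (n:ℝ)⁻¹ * (∑ k, ∑ l, D k l)) :=
            Finset.sum_congr rfl (fun j _ => Tmap_apply D i j)
        _ = (-(1/2)) * ((∑ j, D i j) - n * ((n:ℝ)⁻¹ * ∑ k, D i k)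
              - (n:ℝ)⁻¹ * (∑ j, ∑ k, D k j)
              + n * ((n:ℝ)⁻¹ * (n:ℝ)⁻¹ * (∑ k, ∑ l, D k l))) := by
            rw [← Finset.mul_sum]
            congr 1
            simp [Finset.sum_sub_distrib, Finset.sum_add_distrib, Finset.mul_sum,
              Finset.sum_const, Finset.card_fin, nsmul_eq_mul]
        _ = 0 := by rw [hs]; field_simp; ring
  -- roundtrip 1 : T (K B) = B for B ∈ SC
  have rt1 : ∀ B : Matrix (Fin n) (Fin n) ℝ, B.IsSymm → B *ᵥ (fun _ => (1:ℝ)) = 0 →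
      Tmap (Kmap B) = B := by
    intro B hB h0
    have hr : ∀ i, ∑ k, B i k = 0 := (rowsum B).mp h0
    have hsym : ∀ i j, B j i = B i j := fun i j => (hB.apply j i).symm
    have hrc : ∀ j, ∑ k, B k j = 0 := by
      intro j
      rw [show (∑ k, B k j) = ∑ k, B j k from Finset.sum_congr rfl (fun k _ => (hsym k j).symm)]
      exact hr j
    have h1 : ∀ i, ∑ k, Kmap B i k = n * B i i + ∑ k, B k k := by
      intro i
      have e : ∑ k, Kmap B i k
          = (∑ _k : Fin n, B i i) + (∑ k, B k k) - 2 * ∑ k, B i k := by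
        simp [Kmap, Finset.sum_add_distrib, Finset.sum_sub_distrib, Finset.mul_sum]
      rw [e, hr i, Finset.sum_const, Finset.card_fin, nsmul_eq_mul]
      ring
    have h2 : ∀ j, ∑ k, Kmap B k j = n * B j j + ∑ k, B k k := by
      intro j
      have e : ∑ k, Kmap B k j
          = (∑ k, B k k) + (∑ _k : Fin n, B j j) - 2 * ∑ k, B k j := by
        simp [Kmap, Finset.sum_add_distrib, Finset.sum_sub_distrib, Finset.mul_sum]
      rw [e, hrc j, Finset.sum_const, Finset.card_fin, nsmul_eq_mul]
      ring
    have h3 : ∑ k, ∑ l, Kmap B k l = 2 * n * ∑ k, B k k := by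
      rw [show (∑ k, ∑ l, Kmap B k l) = ∑ k, (n * B k k + ∑ l, B l l) from
        Finset.sum_congr rfl (fun k _ => h1 k)]
      rw [Finset.sum_add_distrib, Finset.sum_const, Finset.card_fin, nsmul_eq_mul,
        ← Finset.mul_sum]
      ring
    ext i j
    rw [Tmap_apply, h1 i, h2 j, h3]
    simp only [Kmap, Matrix.of_apply]
    field_simp
    ring
  -- roundtrip 2 : K (T D) = D for D ∈ SH
  have rt2 : ∀ D : Matrix (Fin n) (Fin n) ℝ, D.IsSymm → (∀ i, D i i = 0) →
      Kmap (Tmap D) = D := by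
    intro D hD h0
    have hsym : ∀ i j, D j i = D i j := fun i j => (hD.apply j i).symm
    have hc : ∀ j, ∑ k, D k j = ∑ k, D j k :=
      fun j => Finset.sum_congr rfl (fun k _ => (hsym k j).symm)
    ext i j
    simp only [Kmap, Matrix.of_apply, Tmap_apply, h0 i, h0 j, hc i, hc j]
    ring
  refine ⟨?_, ?_, fun B hB => rt1 B hB.1 hB.2, fun D hD => rt2 D hD.1 hD.2⟩
  · apply Set.Subset.antisymm
    · rintro _ ⟨B, hB, rfl⟩; exact hK B hB.1
    · rintro A hA
      exact ⟨Tmap A, hT A hA.1, rt2 A hA.1 hA.2⟩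
  · apply Set.Subset.antisymm
    · rintro _ ⟨D, hD, rfl⟩; exact hT D hD.1
    · rintro B hB
      exact ⟨Kmap B, hK B hB.1, rt1 B hB.1 hB.2⟩
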